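/- Let c : [t₀, ∞) → M_n(ℂ) be a differentiable map with c(t) positive definite for all t ≥ t₀, satisfying the noncommutative Ricci flow equation c′(t) = −Δ(log c(t)), with initial value c₀ := c(t₀). Then c(t) converges (in any norm on M_n(ℂ)) as t → ∞ to the flat metric c_∞·1, where c_∞ := τ(c₀)/n. -/

import Mathlib

open Matrix
open scoped ComplexOrder

/-- The derivation `δ₁(a) = ya − ay`. -/
noncomputable def delta1 {n : ℕ} (y a : Matrix (Fin n) (Fin n) ℂ) : Matrix (Fin n) (Fin n) ℂ :=
  y * a - a * y

/-- The derivation `δ₂(a) = ax − xa`. -/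
noncomputable def delta2 {n : ℕ} (x a : Matrix (Fin n) (Fin n) ℂ) : Matrix (Fin n) (Fin n) ℂ :=
  a * x - x * a

/-- The Laplacian `Δ = δ₁∘δ₁ + δ₂∘δ₂`. -/
noncomputable def lap {n : ℕ} (x y a : Matrix (Fin n) (Fin n) ℂ) : Matrix (Fin n) (Fin n) ℂ :=
  delta1 y (delta1 y a) + delta2 x (delta2 x a)

/-- The logarithm of a positive definite (in particular Hermitian) matrix, via the
functional calculus: unitarily diagonalize and take the real logarithm of the eigenvalues. -/
noncomputable def matLog {n : ℕ} (a : Matrix (Fin n) (Fin n) ℂ) : Matrix (Fin n) (Fin n) ℂ :=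
  if h : a.IsHermitian then
    (h.eigenvectorUnitary : Matrix (Fin n) (Fin n) ℂ) *
      Matrix.diagonal (fun i => (Real.log (h.eigenvalues i) : ℂ)) *
      (star (h.eigenvectorUnitary : Matrix (Fin n) (Fin n) ℂ))
  else 0

/-- The generating condition: the only matrices commuting with both `u = exp((2πi/n)x)`
and `v = exp((2πi/n)y)` are the scalar multiples of the identity matrix. -/
def GenCond {n : ℕ} (x y : Matrix (Fin n) (Fin n) ℂ) : Prop :=
  ∀ a : Matrix (Fin n) (Fin n) ℂ,
    a * NormedSpace.exp ((((2 * Real.pi : ℝ) : ℂ) * Complex.I / (n : ℂ)) • x)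
      = NormedSpace.exp ((((2 * Real.pi : ℝ) : ℂ) * Complex.I / (n : ℂ)) • x) * a →
    a * NormedSpace.exp ((((2 * Real.pi : ℝ) : ℂ) * Complex.I / (n : ℂ)) • y)
      = NormedSpace.exp ((((2 * Real.pi : ℝ) : ℂ) * Complex.I / (n : ℂ)) • y) * a →
    ∃ z : ℂ, a = z • (1 : Matrix (Fin n) (Fin n) ℂ)


/-! The squared Frobenius distance `G t = ‖c t - c∞ • 1‖ ^ 2` decays exponentially. Since
`τ ∘ Δ = 0` the flow preserves the trace, so `c t - c∞ • 1` stays trace-free and every eigenvalue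
of `c t` stays below `M = τ c₀`. Moving the derivations across the trace,
`G' = -2 Re τ (c Δ log c) = -2 ∑ₖ Re τ ((δₖ c)ᴴ δₖ (log c))`. Writing `b` for `y` (resp. `x`)
in an eigenbasis of `c`, each summand is
`∑ |bᵢⱼ|² (λᵢ - λⱼ)(log λᵢ - log λⱼ) ≥ ∑ |bᵢⱼ|² (λᵢ - λⱼ)² / M = ‖δₖ c‖² / M`.
The generating condition makes `a ↦ (δ₁ a, δ₂ a, τ a)` injective, hence bounded below, which is
a spectral gap `γ ‖a‖² ≤ ‖δ₁ a‖² + ‖δ₂ a‖²` on trace-free `a`. So `G' ≤ -(2γ/M) G`, and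
Grönwall's inequality concludes. -/

section Commutators

variable {n : ℕ}

lemma trace_delta1 (y a : Matrix (Fin n) (Fin n) ℂ) : (delta1 y a).trace = 0 := by
  rw [delta1, trace_sub, trace_mul_comm, sub_self]

lemma trace_delta2 (x a : Matrix (Fin n) (Fin n) ℂ) : (delta2 x a).trace = 0 := by
  rw [delta2, trace_sub, trace_mul_comm, sub_self]

lemma trace_lap (x y a : Matrix (Fin n) (Fin n) ℂ) : (lap x y a).trace = 0 := by
  rw [lap, trace_add, trace_delta1, trace_delta2, add_zero]

lemma trace_mul_delta1 (y a b : Matrix (Fin n) (Fin n) ℂ) :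
    (a * delta1 y b).trace = -(delta1 y a * b).trace := by
  simp only [delta1, Matrix.mul_sub, Matrix.sub_mul, trace_sub, ← Matrix.mul_assoc]
  rw [trace_mul_cycle a b y]
  ring

lemma trace_mul_delta2 (x a b : Matrix (Fin n) (Fin n) ℂ) :
    (a * delta2 x b).trace = -(delta2 x a * b).trace := by
  simp only [delta2, Matrix.mul_sub, Matrix.sub_mul, trace_sub, ← Matrix.mul_assoc]
  rw [trace_mul_cycle a b x]
  ring

lemma delta1_sub_smul_one (y a : Matrix (Fin n) (Fin n) ℂ) (z : ℂ) :
    delta1 y (a - z • 1) = delta1 y a := by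
  simp [delta1, Matrix.mul_sub, Matrix.sub_mul]

lemma delta2_sub_smul_one (x a : Matrix (Fin n) (Fin n) ℂ) (z : ℂ) :
    delta2 x (a - z • 1) = delta2 x a := by
  simp [delta2, Matrix.mul_sub, Matrix.sub_mul]

lemma conjTranspose_delta1 {y a : Matrix (Fin n) (Fin n) ℂ} (hy : y.IsHermitian)
    (ha : a.IsHermitian) : (delta1 y a)ᴴ = -delta1 y a := by
  rw [delta1, conjTranspose_sub, conjTranspose_mul, conjTranspose_mul, hy.eq, ha.eq, neg_sub]

lemma conjTranspose_delta2 {x a : Matrix (Fin n) (Fin n) ℂ} (hx : x.IsHermitian)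
    (ha : a.IsHermitian) : (delta2 x a)ᴴ = -delta2 x a := by
  rw [delta2, conjTranspose_sub, conjTranspose_mul, conjTranspose_mul, hx.eq, ha.eq, neg_sub]

lemma trace_mul_lap {x y a : Matrix (Fin n) (Fin n) ℂ} (hx : x.IsHermitian) (hy : y.IsHermitian)
    (ha : a.IsHermitian) (b : Matrix (Fin n) (Fin n) ℂ) :
    (a * lap x y b).trace =
      ((delta1 y a)ᴴ * delta1 y b).trace + ((delta2 x a)ᴴ * delta2 x b).trace := by
  rw [lap, Matrix.mul_add, trace_add, trace_mul_delta1, trace_mul_delta2,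
    conjTranspose_delta1 hy ha, conjTranspose_delta2 hx ha, Matrix.neg_mul, Matrix.neg_mul,
    trace_neg, trace_neg]

lemma trace_sub_smul_one_mul_lap (x y a b : Matrix (Fin n) (Fin n) ℂ) (z : ℂ) :
    ((a - z • 1) * lap x y b).trace = (a * lap x y b).trace := by
  rw [Matrix.sub_mul, trace_sub, Matrix.smul_mul, Matrix.one_mul, trace_smul, trace_lap,
    smul_zero, sub_zero]

lemma eq_zero_of_delta_eq_zero {x y a : Matrix (Fin n) (Fin n) ℂ} (hgen : GenCond x y)
    (h1 : delta1 y a = 0) (h2 : delta2 x a = 0) (htr : a.trace = 0) : a = 0 := by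
  have hy : Commute a y := (sub_eq_zero.mp h1).symm
  have hx : Commute a x := sub_eq_zero.mp h2
  obtain ⟨z, rfl⟩ := hgen a (hx.smul_right _).exp_right.eq (hy.smul_right _).exp_right.eq
  rw [trace_smul, trace_one, Fintype.card_fin, smul_eq_mul, mul_eq_zero] at htr
  rcases htr with rfl | hn
  · exact zero_smul _ _
  · obtain rfl : n = 0 := by exact_mod_cast hn
    exact Subsingleton.elim _ _

end Commutators

lemma sq_sub_le_mul_sub_mul_log_sub {a b M : ℝ} (ha : 0 < a) (hb : 0 < b) (haM : a ≤ M)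
    (hbM : b ≤ M) : (a - b) ^ 2 ≤ M * ((a - b) * (Real.log a - Real.log b)) := by
  wlog hba : b ≤ a generalizing a b
  · convert this hb ha hbM haM (le_of_not_ge hba) using 1 <;> ring
  have hlog : 1 - b / a ≤ Real.log a - Real.log b := by
    rw [← Real.log_div ha.ne' hb.ne', ← inv_div]
    exact Real.one_sub_inv_le_log_of_pos (by positivity)
  have hab : 0 ≤ a - b := sub_nonneg.mpr hba
  calc (a - b) ^ 2 = a * ((a - b) * (1 - b / a)) := by field_simp
    _ ≤ M * ((a - b) * (Real.log a - Real.log b)) := by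
      have hba' : 0 ≤ 1 - b / a := by rw [sub_nonneg, div_le_one ha]; exact hba
      exact mul_le_mul haM (mul_le_mul_of_nonneg_left hlog hab) (mul_nonneg hab hba')
        (by linarith)

section Eigenbasis

variable {m 𝕜 : Type*} [Fintype m] [DecidableEq m] [RCLike 𝕜]

lemma commutator_diagonal_apply {R : Type*} [CommRing R] (b : Matrix m m R) (f : m → R)
    (i j : m) :
    (b * diagonal f - diagonal f * b) i j = b i j * (f j - f i) := by
  simp only [Matrix.sub_apply, mul_diagonal, diagonal_mul]
  ring

lemma re_trace_conjTranspose_commutator_diagonal (b : Matrix m m 𝕜) (f g : m → ℝ) :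
    RCLike.re ((b * diagonal (RCLike.ofReal ∘ f) - diagonal (RCLike.ofReal ∘ f) * b)ᴴ *
      (b * diagonal (RCLike.ofReal ∘ g) - diagonal (RCLike.ofReal ∘ g) * b)).trace =
      ∑ i, ∑ j, ‖b j i‖ ^ 2 * ((f i - f j) * (g i - g j)) := by
  simp only [trace, diag, mul_apply, conjTranspose_apply, commutator_diagonal_apply, star_mul',
    Function.comp_apply, RCLike.star_def, map_sub, RCLike.conj_ofReal, map_sum]
  refine Finset.sum_congr rfl fun i _ => Finset.sum_congr rfl fun j _ => ?_
  rw [mul_mul_mul_comm, RCLike.conj_mul]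
  norm_cast

lemma trace_conjStarAlgAut (U : unitary (Matrix m m 𝕜)) (a : Matrix m m 𝕜) :
    (Unitary.conjStarAlgAut 𝕜 _ U a).trace = a.trace := by
  rw [Unitary.conjStarAlgAut_apply, trace_mul_cycle, Unitary.coe_star_mul_self, Matrix.one_mul]

lemma re_trace_conjTranspose_commutator_cfc {A : Matrix m m 𝕜} (hA : A.IsHermitian)
    (w : Matrix m m 𝕜) (f g : ℝ → ℝ) :
    RCLike.re ((w * hA.cfc f - hA.cfc f * w)ᴴ * (w * hA.cfc g - hA.cfc g * w)).trace =
      ∑ i, ∑ j,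
        ‖(star (hA.eigenvectorUnitary : Matrix m m 𝕜) * w * hA.eigenvectorUnitary) j i‖ ^ 2 *
        ((f (hA.eigenvalues i) - f (hA.eigenvalues j)) *
          (g (hA.eigenvalues i) - g (hA.eigenvalues j))) := by
  set U : Matrix m m 𝕜 := ↑hA.eigenvectorUnitary
  set b := star U * w * U
  set φ := Unitary.conjStarAlgAut 𝕜 _ hA.eigenvectorUnitary
  have hw : w = φ b := by
    simp only [φ, b, U, Unitary.conjStarAlgAut_apply, ← Matrix.mul_assoc]
    simp [Matrix.mul_assoc]
  have hcfc (h : ℝ → ℝ) : hA.cfc h = φ (diagonal (RCLike.ofReal ∘ h ∘ hA.eigenvalues)) := rfl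
  have htrace (a : Matrix m m 𝕜) : (φ a).trace = a.trace := trace_conjStarAlgAut _ a
  rw [hcfc, hcfc, hw, ← map_mul, ← map_mul, ← map_mul, ← map_mul, ← map_sub, ← map_sub,
    ← star_eq_conjTranspose, ← map_star, ← map_mul, htrace, star_eq_conjTranspose]
  exact re_trace_conjTranspose_commutator_diagonal _ _ _

lemma eigenvalues_le_re_trace {A : Matrix m m ℂ} (hA : A.PosSemidef) (i : m) :
    hA.1.eigenvalues i ≤ RCLike.re A.trace := by
  rw [hA.1.trace_eq_sum_eigenvalues, map_sum]
  simp only [RCLike.ofReal_re]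
  exact Finset.single_le_sum (fun j _ => hA.eigenvalues_nonneg j) (Finset.mem_univ i)

end Eigenbasis

lemma matLog_eq_cfc {n : ℕ} {A : Matrix (Fin n) (Fin n) ℂ} (hA : A.IsHermitian) :
    matLog A = hA.cfc Real.log := by
  rw [matLog, dif_pos hA]
  rfl

section ODE

open Set Filter Topology

lemma trace_eq_of_hasDerivWithinAt_entries {m : Type*} [Fintype m] {c c' : ℝ → Matrix m m ℂ}
    {t₀ : ℝ}
    (hc : ∀ t ∈ Ici t₀, ∀ i j, HasDerivWithinAt (fun s => c s i j) (c' t i j) (Ici t₀) t)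
    (h0 : ∀ t ∈ Ici t₀, (c' t).trace = 0) : ∀ t ∈ Ici t₀, (c t).trace = (c t₀).trace := by
  have htr (t) (ht : t ∈ Ici t₀) : HasDerivWithinAt (fun s => (c s).trace) 0 (Ici t₀) t := by
    rw [← h0 t ht]
    exact HasDerivWithinAt.fun_sum fun i _ => hc t ht i i
  intro t ht
  refine constant_of_has_deriv_right_zero (f := fun s => (c s).trace) (fun u hu => ?_)
    (fun u hu => ?_) t (right_mem_Icc.2 ht)
  · exact (htr u hu.1).continuousWithinAt.mono Icc_subset_Ici_self
  · exact (htr u hu.1).mono (Ici_subset_Ici.2 hu.1)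

lemma le_mul_exp_of_hasDerivWithinAt_le_neg_mul {f f' : ℝ → ℝ} {k t₀ : ℝ}
    (hf : ∀ t ∈ Ici t₀, HasDerivWithinAt f (f' t) (Ici t₀) t)
    (hf' : ∀ t ∈ Ici t₀, f' t ≤ -k * f t) (t : ℝ) (ht : t ∈ Ici t₀) :
    f t ≤ f t₀ * Real.exp (-k * (t - t₀)) := by
  rw [← gronwallBound_ε0]
  refine le_gronwallBound_of_liminf_deriv_right_le (f' := f') (fun u hu => ?_)
    (fun u hu r hr => ?_) le_rfl (fun u hu => by simpa using hf' u hu.1) t (right_mem_Icc.2 ht)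
  · exact (hf u hu.1).continuousWithinAt.mono Icc_subset_Ici_self
  · exact ((hf u hu.1).mono (Ici_subset_Ici.2 hu.1)).liminf_right_slope_le hr

lemma tendsto_zero_of_hasDerivWithinAt_le_neg_mul {f f' : ℝ → ℝ} {k t₀ : ℝ} (hk : 0 < k)
    (hf : ∀ t ∈ Ici t₀, HasDerivWithinAt f (f' t) (Ici t₀) t)
    (hf' : ∀ t ∈ Ici t₀, f' t ≤ -k * f t) (hf₀ : ∀ t, 0 ≤ f t) : Tendsto f atTop (𝓝 0) := by
  have hexp : Tendsto (fun t => f t₀ * Real.exp (-k * (t - t₀))) atTop (𝓝 0) := by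
    have hlin : Tendsto (fun t => -k * (t - t₀)) atTop atBot :=
      (tendsto_atTop_add_const_right _ _ tendsto_id).const_mul_atTop_of_neg (neg_neg_of_pos hk)
    simpa using (Real.tendsto_exp_atBot.comp hlin).const_mul (f t₀)
  exact tendsto_of_tendsto_of_tendsto_of_le_of_le' tendsto_const_nhds hexp
    (Eventually.of_forall hf₀)
    ((eventually_ge_atTop t₀).mono (le_mul_exp_of_hasDerivWithinAt_le_neg_mul hf hf'))

end ODE

section Frobenius

attribute [local instance] Matrix.frobeniusNormedAddCommGroup Matrix.frobeniusNormedSpace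

open Set Filter Topology

variable {l m : Type*} [Fintype l] [Fintype m]

lemma frobenius_norm_sq_eq_sum {𝕜 : Type*} [RCLike 𝕜] (A : Matrix l m 𝕜) :
    ‖A‖ ^ 2 = ∑ i, ∑ j, ‖A i j‖ ^ 2 := by
  rw [frobenius_norm_def, ← Real.rpow_natCast, ← Real.rpow_mul (by positivity)]
  norm_num

lemma frobenius_norm_sq_eq_re_trace {𝕜 : Type*} [RCLike 𝕜] (A : Matrix l m 𝕜) :
    ‖A‖ ^ 2 = RCLike.re (Aᴴ * A).trace := by
  simp only [frobenius_norm_sq_eq_sum, trace, diag, mul_apply, conjTranspose_apply,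
    RCLike.star_def, RCLike.conj_mul, map_sum]
  norm_cast
  exact Finset.sum_comm

lemma hasDerivWithinAt_norm_sq_of_entries {d : ℝ → Matrix l m ℂ} {d' : Matrix l m ℂ}
    {s : Set ℝ} {t : ℝ} (h : ∀ i j, HasDerivWithinAt (fun u => d u i j) (d' i j) s t) :
    HasDerivWithinAt (fun u => ‖d u‖ ^ 2) (2 * RCLike.re ((d t)ᴴ * d').trace) s t := by
  simp only [frobenius_norm_sq_eq_sum]
  refine (HasDerivWithinAt.fun_sum fun i _ =>
    HasDerivWithinAt.fun_sum fun j _ => (h i j).norm_sq).congr_deriv ?_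
  simp only [trace, diag, mul_apply, conjTranspose_apply, Complex.inner, map_sum, Finset.mul_sum]
  rw [Finset.sum_comm]
  refine Finset.sum_congr rfl fun i _ => Finset.sum_congr rfl fun j _ => ?_
  rw [mul_comm (d' j i)]
  rfl

variable {n : ℕ}

lemma norm_sq_commutator_le {A : Matrix (Fin n) (Fin n) ℂ} (hA : A.PosDef) {M : ℝ}
    (hM : ∀ i, hA.1.eigenvalues i ≤ M) (w : Matrix (Fin n) (Fin n) ℂ) :
    ‖w * A - A * w‖ ^ 2 ≤
      M * RCLike.re ((w * A - A * w)ᴴ * (w * matLog A - matLog A * w)).trace := by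
  have hA_cfc : hA.1.cfc id = A := by
    rw [← hA.1.cfc_eq]
    exact cfc_id ℝ A hA.1
  have hnorm := re_trace_conjTranspose_commutator_cfc hA.1 w id id
  have hpair := re_trace_conjTranspose_commutator_cfc hA.1 w id Real.log
  rw [hA_cfc] at hnorm hpair
  simp only [id] at hnorm hpair
  rw [frobenius_norm_sq_eq_re_trace, matLog_eq_cfc hA.1, hnorm, hpair, Finset.mul_sum]
  refine Finset.sum_le_sum fun i _ => ?_
  rw [Finset.mul_sum]
  refine Finset.sum_le_sum fun j _ => ?_
  rw [← sq, mul_left_comm]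
  exact mul_le_mul_of_nonneg_left (sq_sub_le_mul_sub_mul_log_sub (hA.eigenvalues_pos i)
    (hA.eigenvalues_pos j) (hM i) (hM j)) (sq_nonneg _)

lemma exists_pos_mul_norm_sq_le_delta {x y : Matrix (Fin n) (Fin n) ℂ} (hgen : GenCond x y) :
    ∃ γ > 0, ∀ a : Matrix (Fin n) (Fin n) ℂ, a.trace = 0 →
      γ * ‖a‖ ^ 2 ≤ ‖delta1 y a‖ ^ 2 + ‖delta2 x a‖ ^ 2 := by
  let f := (LinearMap.mulLeft ℂ y - LinearMap.mulRight ℂ y).prod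
    ((LinearMap.mulRight ℂ x - LinearMap.mulLeft ℂ x).prod (traceLinearMap (Fin n) ℂ ℂ))
  have hf (a : Matrix (Fin n) (Fin n) ℂ) : f a = (delta1 y a, delta2 x a, a.trace) := rfl
  have hinj : Function.Injective f := by
    rw [← LinearMap.ker_eq_bot, LinearMap.ker_eq_bot']
    intro a ha
    simp only [hf, Prod.mk_eq_zero] at ha
    exact eq_zero_of_delta_eq_zero hgen ha.1 ha.2.1 ha.2.2
  obtain ⟨K, hK, hanti⟩ := f.injective_iff_antilipschitz.mp hinj
  refine ⟨1 / (K : ℝ) ^ 2, by positivity, fun a ha => ?_⟩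
  have hbound := ZeroHomClass.bound_of_antilipschitz f hanti a
  rw [hf, ha, Prod.norm_mk, Prod.norm_mk, norm_zero, max_eq_left (norm_nonneg _)] at hbound
  have hmax : max ‖delta1 y a‖ ‖delta2 x a‖ ^ 2 ≤ ‖delta1 y a‖ ^ 2 + ‖delta2 x a‖ ^ 2 := by
    rcases le_total ‖delta1 y a‖ ‖delta2 x a‖ with h | h <;> simp [h]
  rw [div_mul_eq_mul_div, one_mul, div_le_iff₀ (by positivity)]
  calc ‖a‖ ^ 2 ≤ (K * max ‖delta1 y a‖ ‖delta2 x a‖) ^ 2 := by gcongr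
    _ ≤ (‖delta1 y a‖ ^ 2 + ‖delta2 x a‖ ^ 2) * K ^ 2 := by rw [mul_pow, mul_comm]; gcongr

lemma mul_norm_sq_le_re_trace_mul_lap {x y c : Matrix (Fin n) (Fin n) ℂ} (hx : x.IsHermitian)
    (hy : y.IsHermitian) (hc : c.PosDef) {M γ : ℝ} (hM : ∀ i, hc.1.eigenvalues i ≤ M)
    (hgap : ∀ a : Matrix (Fin n) (Fin n) ℂ, a.trace = 0 →
      γ * ‖a‖ ^ 2 ≤ ‖delta1 y a‖ ^ 2 + ‖delta2 x a‖ ^ 2)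
    {z : ℂ} (hz : (c - z • 1).trace = 0) :
    γ * ‖c - z • 1‖ ^ 2 ≤ M * RCLike.re (c * lap x y (matLog c)).trace := by
  have h1 : ‖delta1 y c‖ ^ 2 ≤
      M * RCLike.re ((delta1 y c)ᴴ * delta1 y (matLog c)).trace :=
    norm_sq_commutator_le hc hM y
  have h2 : ‖delta2 x c‖ ^ 2 ≤
      M * RCLike.re ((delta2 x c)ᴴ * delta2 x (matLog c)).trace := by
    have hneg (a : Matrix (Fin n) (Fin n) ℂ) : x * a - a * x = -delta2 x a := (neg_sub _ _).symm
    have := norm_sq_commutator_le hc hM x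
    rwa [hneg, hneg, norm_neg, conjTranspose_neg, neg_mul_neg] at this
  calc γ * ‖c - z • 1‖ ^ 2 ≤ ‖delta1 y c‖ ^ 2 + ‖delta2 x c‖ ^ 2 := by
        simpa only [delta1_sub_smul_one, delta2_sub_smul_one] using hgap _ hz
    _ ≤ M * RCLike.re (c * lap x y (matLog c)).trace := by
        rw [trace_mul_lap hx hy hc.1, map_add, mul_add]
        exact add_le_add h1 h2

lemma hasDerivWithinAt_norm_sq_sub_smul_one {x y L : Matrix (Fin n) (Fin n) ℂ}
    {c : ℝ → Matrix (Fin n) (Fin n) ℂ} {s : Set ℝ} {t : ℝ} (hc : (c t).IsHermitian) (z : ℂ)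
    (h : ∀ i j, HasDerivWithinAt (fun u => c u i j) ((-lap x y L) i j) s t) :
    HasDerivWithinAt (fun u => ‖c u - z • 1‖ ^ 2)
      (-2 * RCLike.re (c t * lap x y L).trace) s t := by
  refine (hasDerivWithinAt_norm_sq_of_entries (d := fun u => c u - z • 1)
    fun i j => (h i j).sub_const _).congr_deriv ?_
  rw [conjTranspose_sub, hc.eq, conjTranspose_smul, conjTranspose_one, Matrix.mul_neg, trace_neg,
    trace_sub_smul_one_mul_lap, map_neg]
  ring

/-- Under the noncommutative Ricci flow, the metric converges as `t → ∞` to the flat metric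
`c_∞·1` where `c_∞ = τ(c₀)/n`. -/
theorem ricci_flow_tendsto_flat (n : ℕ) (hn : 0 < n) (x y : Matrix (Fin n) (Fin n) ℂ)
    (hx : x.IsHermitian) (hy : y.IsHermitian) (hgen : GenCond x y)
    (t₀ : ℝ) (c : ℝ → Matrix (Fin n) (Fin n) ℂ)
    (hpos : ∀ t ∈ Set.Ici t₀, (c t).PosDef)
    (hflow : ∀ t ∈ Set.Ici t₀, ∀ i j, HasDerivWithinAt (fun s => c s i j)
      ((-(lap x y (matLog (c t)))) i j) (Set.Ici t₀) t) :
    Filter.Tendsto c Filter.atTop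
      (nhds (((c t₀).trace / (n : ℂ)) • (1 : Matrix (Fin n) (Fin n) ℂ))) := by
  have : Nonempty (Fin n) := ⟨⟨0, hn⟩⟩
  have htrace := trace_eq_of_hasDerivWithinAt_entries hflow fun t _ => by
    rw [trace_neg, trace_lap, neg_zero]
  set z := (c t₀).trace / n
  have hz (t : ℝ) (ht : t ∈ Ici t₀) : (c t - z • 1).trace = 0 := by
    rw [trace_sub, htrace t ht, trace_smul, trace_one, Fintype.card_fin, smul_eq_mul,
      div_mul_cancel₀ _ (by exact_mod_cast hn.ne'), sub_self]
  set M := RCLike.re (c t₀).trace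
  have hM : 0 < M := (RCLike.pos_iff.1 (hpos t₀ self_mem_Ici).trace_pos).1
  obtain ⟨γ, hγ, hgap⟩ := exists_pos_mul_norm_sq_le_delta hgen
  have hdecay (t : ℝ) (ht : t ∈ Ici t₀) : -2 * RCLike.re (c t * lap x y (matLog (c t))).trace ≤
      -(2 * γ / M) * ‖c t - z • 1‖ ^ 2 := by
    have hM_t (i : Fin n) : (hpos t ht).1.eigenvalues i ≤ M := by
      simpa only [htrace t ht] using eigenvalues_le_re_trace (hpos t ht).posSemidef i
    have := mul_norm_sq_le_re_trace_mul_lap hx hy (hpos t ht) hM_t hgap (hz t ht)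
    rw [neg_mul, neg_mul, neg_le_neg_iff, div_mul_eq_mul_div, div_le_iff₀ hM]
    linarith
  have hG := tendsto_zero_of_hasDerivWithinAt_le_neg_mul (by positivity)
    (fun t ht => hasDerivWithinAt_norm_sq_sub_smul_one (hpos t ht).1 z (hflow t ht)) hdecay
    (fun _ => sq_nonneg _)
  refine tendsto_iff_norm_sub_tendsto_zero.2 ?_
  simpa using hG.sqrt

end Frobenius
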